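/- The clobber position ooxox is equivalent to star, the game {0 | 0}. -/

import Mathlib

namespace SetTheory

universe u

/-- Pre-games (removed from Mathlib; reproduced with the Mathlib (Dec 2024) meaning). -/
inductive PGame : Type (u + 1)
  | mk : ∀ α β : Type u, (α → PGame) → (β → PGame) → PGame

namespace PGame

-- `x ≤ y` and `x ⧏ y`, as the (unique, by well-foundedness) solution of Mathlib's `le_def` / `lf_def`.
mutual
inductive Le : PGame.{u} → PGame.{u} → Prop
  | intro {xl xr : Type u} {xL : xl → PGame} {xR : xr → PGame}
      {yl yr : Type u} {yL : yl → PGame} {yR : yr → PGame} :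
      (∀ i, Lf (xL i) (mk yl yr yL yR)) → (∀ j, Lf (mk xl xr xL xR) (yR j)) →
      Le (mk xl xr xL xR) (mk yl yr yL yR)
inductive Lf : PGame.{u} → PGame.{u} → Prop
  | left {xl xr : Type u} {xL : xl → PGame} {xR : xr → PGame}
      {yl yr : Type u} {yL : yl → PGame} {yR : yr → PGame} (j : yl) :
      Le (mk xl xr xL xR) (yL j) → Lf (mk xl xr xL xR) (mk yl yr yL yR)
  | right {xl xr : Type u} {xL : xl → PGame} {xR : xr → PGame}
      {yl yr : Type u} {yL : yl → PGame} {yR : yr → PGame} (i : xr) :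
      Le (xR i) (mk yl yr yL yR) → Lf (mk xl xr xL xR) (mk yl yr yL yR)
end

instance : LE PGame.{u} := ⟨Le⟩

/-- Equivalence of pre-games: `x ≤ y ∧ y ≤ x`. -/
def Equiv (x y : PGame.{u}) : Prop := x ≤ y ∧ y ≤ x

instance : HasEquiv PGame.{u} := ⟨Equiv⟩

instance : Zero PGame.{u} := ⟨mk PEmpty PEmpty PEmpty.elim PEmpty.elim⟩

/-- `star = {0|0}`. -/
def star : PGame.{u} := mk PUnit PUnit (fun _ => 0) (fun _ => 0)

/-- Mathlib's `PGame.ofLists`. -/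
def ofLists (L R : List PGame.{u}) : PGame.{u} :=
  mk (ULift (Fin L.length)) (ULift (Fin R.length)) (fun i => L.get i.down) fun j => R.get j.down

end PGame

end SetTheory

open SetTheory PGame

inductive Cell | x | o | e
deriving DecidableEq

abbrev Pos := List Cell

/-- All positions reachable by one move of the player with stones `me`
clobbering an adjacent stone of the opponent `opp`. -/
def movesAux (me opp : Cell) : Pos → List Pos
  | a :: b :: rest =>
      (if a = me ∧ b = opp then [Cell.e :: me :: rest] else []) ++
      (if a = opp ∧ b = me then [me :: Cell.e :: rest] else []) ++
      (movesAux me opp (b :: rest)).map (a :: ·)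
  | _ => []

def leftMoves (p : Pos) : List Pos := movesAux Cell.x Cell.o p
def rightMoves (p : Pos) : List Pos := movesAux Cell.o Cell.x p

def stones (p : Pos) : Nat := p.countP (· != Cell.e)

/-- Game value of a clobber position, via fuel recursion (each move removes one stone). -/
def valueFuel : Nat → Pos → PGame
  | 0, _ => 0
  | n+1, p => PGame.ofLists ((leftMoves p).map (valueFuel n)) ((rightMoves p).map (valueFuel n))

def value (p : Pos) : PGame := valueFuel (stones p) p

/-!
Against `0` and `* = {0|0}`, whose options are all `0`, the recursive definitions of `≤` and `⧏`
only ask about the options of the other game, so comparisons of clobber values with `0` and `*`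
unfold along the game tree, which is finite because every move removes a stone. In `ooxox` every
Left move leaves a position `≤ 0`, every Right move leaves a position `G` with `* ⧏ G`, and each
player has a winning first move (Right to `oooex`, Left to `ooexx`), so `ooxox` is fuzzy with `0`
and equals `*`.
-/

universe u

namespace SetTheory.PGame

infix:50 " ⧏ " => Lf

section mk

variable {xl xr yl yr : Type u} {xL : xl → PGame.{u}} {xR : xr → PGame.{u}}
  {yL : yl → PGame.{u}} {yR : yr → PGame.{u}}

theorem mk_le_mk_iff :
    mk xl xr xL xR ≤ mk yl yr yL yR ↔
      (∀ i, xL i ⧏ mk yl yr yL yR) ∧ ∀ j, mk xl xr xL xR ⧏ yR j :=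
  ⟨fun | .intro h₁ h₂ => ⟨h₁, h₂⟩, fun ⟨h₁, h₂⟩ => .intro h₁ h₂⟩

theorem mk_lf_mk_iff :
    mk xl xr xL xR ⧏ mk yl yr yL yR ↔
      (∃ j, mk xl xr xL xR ≤ yL j) ∨ ∃ i, xR i ≤ mk yl yr yL yR :=
  ⟨fun | .left j h => .inl ⟨j, h⟩ | .right i h => .inr ⟨i, h⟩,
    fun | .inl ⟨j, h⟩ => .left j h | .inr ⟨i, h⟩ => .right i h⟩

end mk

theorem forall_ulift_fin_get_iff {α : Type*} {l : List α} {p : α → Prop} :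
    (∀ i : ULift (Fin l.length), p (l.get i.down)) ↔ ∀ a ∈ l, p a := by
  rw [List.forall_mem_iff_get, ULift.forall]

theorem exists_ulift_fin_get_iff {α : Type*} {l : List α} {p : α → Prop} :
    (∃ i : ULift (Fin l.length), p (l.get i.down)) ↔ ∃ a ∈ l, p a := by
  rw [List.exists_mem_iff_get, ULift.exists]

theorem zero_def : (0 : PGame.{u}) = mk PEmpty PEmpty PEmpty.elim PEmpty.elim := rfl

section ofLists

variable {L R : List PGame.{u}} {yl yr : Type u} {yL : yl → PGame.{u}} {yR : yr → PGame.{u}}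

theorem ofLists_le_mk_iff :
    ofLists L R ≤ mk yl yr yL yR ↔ (∀ a ∈ L, a ⧏ mk yl yr yL yR) ∧ ∀ j, ofLists L R ⧏ yR j :=
  mk_le_mk_iff.trans (and_congr_left' (forall_ulift_fin_get_iff (p := (· ⧏ _))))

theorem mk_le_ofLists_iff :
    mk yl yr yL yR ≤ ofLists L R ↔ (∀ i, yL i ⧏ ofLists L R) ∧ ∀ b ∈ R, mk yl yr yL yR ⧏ b :=
  mk_le_mk_iff.trans (and_congr_right' forall_ulift_fin_get_iff)

theorem ofLists_lf_mk_iff :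
    ofLists L R ⧏ mk yl yr yL yR ↔ (∃ j, ofLists L R ≤ yL j) ∨ ∃ b ∈ R, b ≤ mk yl yr yL yR :=
  mk_lf_mk_iff.trans (or_congr Iff.rfl (exists_ulift_fin_get_iff (p := (· ≤ _))))

theorem mk_lf_ofLists_iff :
    mk yl yr yL yR ⧏ ofLists L R ↔ (∃ a ∈ L, mk yl yr yL yR ≤ a) ∨ ∃ i, yR i ≤ ofLists L R :=
  mk_lf_mk_iff.trans (or_congr exists_ulift_fin_get_iff Iff.rfl)

@[simp] theorem ofLists_le_zero_iff : ofLists L R ≤ 0 ↔ ∀ a ∈ L, a ⧏ 0 := by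
  simp [zero_def, ofLists_le_mk_iff]

@[simp] theorem zero_le_ofLists_iff : 0 ≤ ofLists L R ↔ ∀ b ∈ R, 0 ⧏ b := by
  simp [zero_def, mk_le_ofLists_iff]

@[simp] theorem ofLists_lf_zero_iff : ofLists L R ⧏ 0 ↔ ∃ b ∈ R, b ≤ 0 := by
  simp [zero_def, ofLists_lf_mk_iff]

@[simp] theorem zero_lf_ofLists_iff : 0 ⧏ ofLists L R ↔ ∃ a ∈ L, 0 ≤ a := by
  simp [zero_def, mk_lf_ofLists_iff]

@[simp] theorem ofLists_le_star_iff :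
    ofLists L R ≤ star ↔ (∀ a ∈ L, a ⧏ star) ∧ ofLists L R ⧏ 0 := by
  simp [star, ofLists_le_mk_iff]

@[simp] theorem star_le_ofLists_iff :
    star ≤ ofLists L R ↔ 0 ⧏ ofLists L R ∧ ∀ b ∈ R, star ⧏ b := by
  simp [star, mk_le_ofLists_iff]

@[simp] theorem ofLists_lf_star_iff :
    ofLists L R ⧏ star ↔ (∃ b ∈ R, b ≤ star) ∨ ofLists L R ≤ 0 := by
  simp [star, ofLists_lf_mk_iff, or_comm]

@[simp] theorem star_lf_ofLists_iff :
    star ⧏ ofLists L R ↔ (∃ a ∈ L, star ≤ a) ∨ 0 ≤ ofLists L R := by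
  simp [star, mk_lf_ofLists_iff]

end ofLists

theorem lf_star_of_le_zero {x : PGame.{u}} (h : x ≤ 0) : x ⧏ star := by
  cases x
  exact .left PUnit.unit h

end SetTheory.PGame

theorem stones_add_one_of_mem_movesAux {me opp : Cell} (hme : me ≠ .e) (hopp : opp ≠ .e)
    {p q : Pos} (hq : q ∈ movesAux me opp p) : stones q + 1 = stones p := by
  induction p using movesAux.induct generalizing q with
  | case1 a b rest ih =>
    simp only [movesAux, List.mem_append, List.mem_map] at hq
    rcases hq with (hq | hq) | ⟨q', hq', rfl⟩
    · split_ifs at hq <;> simp_all [stones]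
    · split_ifs at hq <;> simp_all [stones]
    · have := ih hq'
      simp only [stones, List.countP_cons] at this ⊢
      omega
  | case2 p hp =>
    rcases p with _ | ⟨a, _ | ⟨b, rest⟩⟩
    · simp [movesAux] at hq
    · simp [movesAux] at hq
    · exact (hp a b rest rfl).elim

theorem value_eq_ofLists {p : Pos} (hp : 0 < stones p) :
    value p = ofLists ((leftMoves p).map value) ((rightMoves p).map value) := by
  obtain ⟨n, hn⟩ := Nat.exists_eq_add_of_lt hp
  have value_of_mem {me opp : Cell} (hme : me ≠ .e) (hopp : opp ≠ .e) {q : Pos}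
      (hq : q ∈ movesAux me opp p) : valueFuel n q = value q := by
    have := stones_add_one_of_mem_movesAux hme hopp hq
    rw [value, show stones q = n by omega]
  rw [value, hn, zero_add, valueFuel, leftMoves, rightMoves,
    List.map_congr_left (fun q hq => value_of_mem (by decide) (by decide) hq),
    List.map_congr_left (fun q hq => value_of_mem (by decide) (by decide) hq)]

theorem value_equiv_star_iff {p : Pos} (hp : 0 < stones p) :
    value.{u} p ≈ star ↔ (∀ q ∈ leftMoves p, value.{u} q ⧏ star) ∧ value.{u} p ⧏ 0 ∧
      0 ⧏ value.{u} p ∧ ∀ q ∈ rightMoves p, star ⧏ value.{u} q := by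
  change value p ≤ star ∧ star ≤ value p ↔ _
  rw [value_eq_ofLists hp, ofLists_le_star_iff, star_le_ofLists_iff]
  simp only [List.forall_mem_map, and_assoc]

section ooxox

open Cell

theorem value_ooxox_lf_zero : value [o, o, x, o, x] ⧏ 0 := by
  rw [value_eq_ofLists (by decide), ofLists_lf_zero_iff]
  exact ⟨value [o, o, o, e, x], by simp [rightMoves, movesAux],
    by simp [value_eq_ofLists, leftMoves, movesAux, stones]⟩

theorem zero_lf_value_ooxox : 0 ⧏ value [o, o, x, o, x] := by
  rw [value_eq_ofLists (by decide), zero_lf_ofLists_iff]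
  exact ⟨value [o, o, e, x, x], by simp [leftMoves, movesAux],
    by simp [value_eq_ofLists, rightMoves, movesAux, stones]⟩

theorem value_le_zero_of_mem_leftMoves_ooxox :
    ∀ q ∈ leftMoves [o, o, x, o, x], value q ≤ 0 := by
  simp [value_eq_ofLists, leftMoves, rightMoves, movesAux, stones]

theorem star_lf_value_of_mem_rightMoves_ooxox :
    ∀ q ∈ rightMoves [o, o, x, o, x], star ⧏ value q := by
  simp [value_eq_ofLists, leftMoves, rightMoves, movesAux, stones]

end ooxox

/-- The clobber position `ooxox` is equivalent to `* = {0|0}`. -/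
theorem ooxox_equiv_star :
    value [Cell.o, Cell.o, Cell.x, Cell.o, Cell.x] ≈ star :=
  (value_equiv_star_iff (by decide)).2
    ⟨fun q hq => lf_star_of_le_zero (value_le_zero_of_mem_leftMoves_ooxox q hq),
      value_ooxox_lf_zero, zero_lf_value_ooxox, star_lf_value_of_mem_rightMoves_ooxox⟩
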